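/- Let H_j denote the probabilists' Hermite polynomials, defined by H₀ = 1, H₁(x) = x, and H_{j+1}(x) = x·H_j(x) − H_j'(x). For every even integer j ≥ 2, the quantity α_j := (H_j(0) + j·H_{j−2}(0)) / √(2π·j!) satisfies α_j = (−1)^{(j−2)/2} · j·(j−2)! / ( (j/2)! · 2^{j/2} · √(2π·j!) ) and |α_j| ≤ j^{−5/4}. -/

import Mathlib

/-!
Write `j = 2n + 2`. Since `H_{2m}(0) = (-1)^m (2m-1)‼`, the numerator
`H_{2n+2}(0) + (2n+2) H_{2n}(0)` collapses to `(-1)^n (2n-1)‼`, which is the exact formula.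
Squaring, `α_j² = C(2n,n) / (4^n · 2π (2n+1)(2n+2))`, and the Wallis-type estimate
`(3n+1) C(2n,n)² ≤ 16^n` (by induction on `n`) turns `α_j⁴ j⁵ ≤ 1` into the polynomial
inequality `(2n+2)³ ≤ 36 (2n+1)² (3n+1)`, using `π² ≥ 9`.
-/

/-- The `j`-th Hermite coefficient of the ReLU function (for `j ≥ 2`), expressed in terms of
the probabilists' Hermite polynomials `Polynomial.hermite` (defined by `H₀ = 1` and
`H_{j+1} = X·H_j − H_j'`, so `H₁(x) = x`). -/
noncomputable def reluHermiteCoeff (j : ℕ) : ℝ :=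
  ((((Polynomial.hermite j).eval 0 + (j : ℤ) * (Polynomial.hermite (j - 2)).eval 0 : ℤ)) : ℝ) /
    Real.sqrt (2 * Real.pi * (j.factorial : ℝ))

open Nat Polynomial

theorem Nat.factorial_two_mul_eq (n : ℕ) : (2 * n)! = 2 ^ n * n ! * (2 * n - 1)‼ := by
  rcases n with _ | n
  · rfl
  · rw [← doubleFactorial_two_mul, show 2 * (n + 1) = 2 * n + 1 + 1 by ring,
      factorial_eq_mul_doubleFactorial, Nat.add_sub_cancel]

theorem Nat.doubleFactorial_sq_mul_four_pow (n : ℕ) :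
    (2 * n - 1)‼ ^ 2 * 4 ^ n = (2 * n)! * centralBinom n := by
  have hcb : centralBinom n * (n ! * n !) = (2 * n)! := by
    rw [centralBinom_eq_two_mul_choose, ← mul_assoc]
    simpa [two_mul] using choose_mul_factorial_mul_factorial (show n ≤ 2 * n by omega)
  apply Nat.eq_of_mul_eq_mul_right (by positivity : 0 < n ! * n !)
  calc (2 * n - 1)‼ ^ 2 * 4 ^ n * (n ! * n !)
      = (2 ^ n * n ! * (2 * n - 1)‼) ^ 2 := by
        rw [show (4 : ℕ) = 2 ^ 2 from rfl, ← pow_mul]; ring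
    _ = (2 * n)! * centralBinom n * (n ! * n !) := by
        rw [← factorial_two_mul_eq, mul_assoc, hcb]; ring

theorem Nat.three_mul_add_one_mul_centralBinom_sq_le (n : ℕ) :
    (3 * n + 1) * centralBinom n ^ 2 ≤ 16 ^ n := by
  induction n with
  | zero => simp
  | succ k ih =>
    refine Nat.le_of_mul_le_mul_left ?_ (show 0 < (k + 1) ^ 2 by positivity)
    calc (k + 1) ^ 2 * ((3 * (k + 1) + 1) * centralBinom (k + 1) ^ 2)
        = (3 * k + 4) * ((k + 1) * centralBinom (k + 1)) ^ 2 := by ring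
      _ = (3 * k + 4) * (2 * k + 1) ^ 2 * (4 * centralBinom k ^ 2) := by
          rw [succ_mul_centralBinom_succ]; ring
      _ ≤ 4 * (k + 1) ^ 2 * (3 * k + 1) * (4 * centralBinom k ^ 2) :=
          Nat.mul_le_mul_right _ (by nlinarith)
      _ = (k + 1) ^ 2 * (16 * ((3 * k + 1) * centralBinom k ^ 2)) := by ring
      _ ≤ (k + 1) ^ 2 * (16 * 16 ^ k) := by gcongr
      _ = (k + 1) ^ 2 * 16 ^ (k + 1) := by ring

theorem Polynomial.hermite_two_mul_eval_zero (m : ℕ) :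
    (hermite (2 * m)).eval 0 = (-1) ^ m * (2 * m - 1)‼ := by
  simpa [← coeff_zero_eq_eval_zero] using coeff_hermite_explicit m 0

theorem reluHermiteCoeff_two_mul_add_two (n : ℕ) :
    reluHermiteCoeff (2 * n + 2) =
      (-1) ^ n * (2 * n - 1)‼ / Real.sqrt (2 * Real.pi * (2 * n + 2)!) := by
  -- `H_{2n+2}(0) = -(2n+1) H_{2n}(0)`, so only the factor `(2n+2) - (2n+1) = 1` survives.
  have hnum : (hermite (2 * n + 2)).eval 0 + ((2 * n + 2 : ℕ) : ℤ) * (hermite (2 * n)).eval 0 =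
      (-1) ^ n * (2 * n - 1)‼ := by
    rw [show 2 * n + 2 = 2 * (n + 1) by ring, Polynomial.hermite_two_mul_eval_zero,
      Polynomial.hermite_two_mul_eval_zero, show 2 * (n + 1) - 1 = 2 * n + 1 by omega,
      doubleFactorial_add_one]
    push_cast
    ring
  rw [reluHermiteCoeff, Nat.add_sub_cancel, hnum]
  push_cast
  rfl

theorem reluHermiteCoeff_sq_mul (n : ℕ) :
    reluHermiteCoeff (2 * n + 2) ^ 2 * (2 * Real.pi * ((2 * n + 1) * (2 * n + 2)) * 4 ^ n) =
      centralBinom n := by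
  have hdf : ((2 * n - 1)‼ : ℝ) ^ 2 * 4 ^ n = (2 * n)! * centralBinom n := by
    exact_mod_cast doubleFactorial_sq_mul_four_pow n
  have hfac : ((2 * n + 2)! : ℝ) = (2 * n + 2) * ((2 * n + 1) * (2 * n)!) := by
    push_cast [factorial_succ]; ring
  rw [reluHermiteCoeff_two_mul_add_two, div_pow, mul_pow, ← pow_mul, pow_mul', neg_one_sq,
    one_pow, one_mul, Real.sq_sqrt (by positivity), hfac]
  field_simp
  linear_combination hdf

theorem Real.le_rpow_neg_div_of_pow_mul_pow_le_one {x y : ℝ} {k : ℕ} (m : ℕ) (hk : k ≠ 0)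
    (hx : 0 ≤ x) (hy : 0 < y) (h : x ^ k * y ^ m ≤ 1) : x ≤ y ^ (-(m : ℝ) / k) := by
  have hxk : x ^ k ≤ (y ^ m)⁻¹ := by
    rwa [← one_div, le_div_iff₀ (by positivity)]
  calc x = (x ^ k) ^ (k⁻¹ : ℝ) := (Real.pow_rpow_inv_natCast hx hk).symm
    _ ≤ ((y ^ m)⁻¹) ^ (k⁻¹ : ℝ) := by gcongr
    _ = y ^ (-(m : ℝ) / k) := by
      rw [Real.inv_rpow (by positivity), ← Real.rpow_natCast, ← Real.rpow_mul hy.le,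
        ← Real.rpow_neg hy.le, neg_div, div_eq_mul_inv]

theorem abs_reluHermiteCoeff_le (n : ℕ) :
    |reluHermiteCoeff (2 * n + 2)| ≤ (2 * n + 2 : ℝ) ^ (-(5 : ℝ) / 4) := by
  suffices h : |reluHermiteCoeff (2 * n + 2)| ^ 4 * (2 * n + 2 : ℝ) ^ 5 ≤ 1 by
    exact_mod_cast Real.le_rpow_neg_div_of_pow_mul_pow_le_one 5 four_ne_zero (abs_nonneg _)
      (by positivity) h
  set D : ℝ := 2 * Real.pi * ((2 * n + 1) * (2 * n + 2)) * 4 ^ n with hD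
  have ha : reluHermiteCoeff (2 * n + 2) ^ 2 = centralBinom n / D :=
    eq_div_of_mul_eq (by positivity) (reluHermiteCoeff_sq_mul n)
  have hC : (3 * n + 1 : ℝ) * centralBinom n ^ 2 ≤ 16 ^ n := by
    exact_mod_cast three_mul_add_one_mul_centralBinom_sq_le n
  have hpoly : (2 * n + 2 : ℝ) ^ 3 ≤ 36 * ((2 * n + 1) ^ 2 * (3 * n + 1)) := by
    nlinarith [sq_nonneg (n : ℝ), pow_nonneg (Nat.cast_nonneg n : (0 : ℝ) ≤ n) 3]
  have hpi : (36 : ℝ) ≤ 4 * Real.pi ^ 2 := by nlinarith [Real.pi_gt_three]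
  rw [show |reluHermiteCoeff (2 * n + 2)| ^ 4 = (reluHermiteCoeff (2 * n + 2) ^ 2) ^ 2 by
      rw [← pow_mul]; exact Even.pow_abs ⟨2, rfl⟩ _,
    ha, div_pow, div_mul_eq_mul_div, div_le_one (by positivity)]
  calc (centralBinom n : ℝ) ^ 2 * (2 * (n : ℝ) + 2) ^ 5
      = (2 * (n : ℝ) + 2) ^ 2 * (2 * n + 2) ^ 3 * centralBinom n ^ 2 := by ring
    _ ≤ (2 * (n : ℝ) + 2) ^ 2 * (36 * ((2 * n + 1) ^ 2 * (3 * n + 1))) * centralBinom n ^ 2 :=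
      by gcongr
    _ = 36 * ((2 * (n : ℝ) + 1) ^ 2 * (2 * n + 2) ^ 2) * ((3 * n + 1) * centralBinom n ^ 2) := by
      ring
    _ ≤ 4 * Real.pi ^ 2 * ((2 * n + 1) ^ 2 * (2 * n + 2) ^ 2) * 16 ^ n := by gcongr
    _ = D ^ 2 := by
      rw [hD, show (16 : ℝ) = 4 ^ 2 by norm_num, ← pow_mul, mul_comm 2 n, pow_mul]
      ring

theorem relu_hermite_coeff_bound (j : ℕ) (hj : 2 ≤ j) (hje : Even j) :
    reluHermiteCoeff j =
      (-1 : ℝ) ^ ((j - 2) / 2) * ((j : ℝ) * ((j - 2).factorial : ℝ)) /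
        (((j / 2).factorial : ℝ) * 2 ^ (j / 2) * Real.sqrt (2 * Real.pi * (j.factorial : ℝ))) ∧
    |reluHermiteCoeff j| ≤ (j : ℝ) ^ (-(5 : ℝ) / 4) := by
  obtain ⟨n, rfl⟩ : ∃ n, j = 2 * n + 2 := by
    obtain ⟨m, rfl⟩ := hje
    exact ⟨m - 1, by omega⟩
  rw [show (2 * n + 2 - 2) / 2 = n by omega, show 2 * n + 2 - 2 = 2 * n by omega,
    show (2 * n + 2) / 2 = n + 1 by omega]
  refine ⟨?_, by exact_mod_cast abs_reluHermiteCoeff_le n⟩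
  have hdf : ((2 * n + 2 : ℕ) : ℝ) * (2 * n)! = (2 * n - 1)‼ * ((n + 1)! * 2 ^ (n + 1)) := by
    rw [factorial_two_mul_eq, factorial_succ]
    push_cast
    ring
  rw [reluHermiteCoeff_two_mul_add_two, div_eq_div_iff (by positivity) (by positivity), hdf]
  ring
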